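/- Let X be a real random variable with mean zero such that for some σ > 0 and all s > 0, ℙ(X ≥ s) ≤ exp(−s²/(2σ²)) and ℙ(X ≤ −s) ≤ exp(−s²/(2σ²)). Then the random variable Z = X² − 𝔼[X²] is sub-exponential with parameters (8√2·σ², 8σ²); that is, 𝔼[exp(λZ)] ≤ exp( (8√2·σ²)²·λ²/2 ) = exp(64σ⁴λ²) for every λ with |λ| ≤ 1/(8σ²). Moreover, for every integer k ≥ 1, 𝔼[X^{2k}] ≤ 2^{k+1}·σ^{2k}·k!. -/

import Mathlib

/-!
The two one-sided bounds give `μ {t ≤ |X|} ≤ 2 exp (-t² / (2σ²))`, and the layer-cake formula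
turns this into `𝔼|X|^p ≤ p (2σ²)^(p/2) Γ(p/2)`, which for `p = 2k` is the moment bound.
For `0 ≤ c ≤ 1/(8σ²)`, expanding `exp (c X²)` as a power series and bounding the `k`-th term by
`2 (2cσ²)^k` with `2cσ² ≤ 1/4` gives `𝔼 exp (c X²) ≤ 1 + c 𝔼X² + (32/3) c² σ⁴`; a negative `c`
is reduced to `|c|` through `exp u ≤ exp |u| + (u - |u|)`. Multiplying by `exp (-c 𝔼X²)` and
using `1 + x ≤ exp x` leaves `exp ((32/3) c² σ⁴) ≤ exp (64 σ⁴ c²)`.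
-/

open MeasureTheory Real Set
open scoped ENNReal Nat

lemma Real.exp_le_exp_abs_add_sub_abs (u : ℝ) : exp u ≤ exp |u| + (u - |u|) := by
  rcases le_total 0 u with hu | hu
  · simp [abs_of_nonneg hu]
  · have := sinh_le_self_iff.mpr hu
    rw [sinh_eq] at this
    rw [abs_of_nonpos hu]
    linarith

lemma neg_sq_div_eq_neg_inv_mul_rpow_two (t s : ℝ) : -t ^ 2 / s = -s⁻¹ * t ^ (2 : ℝ) := by
  rw [rpow_two]
  ring

lemma integrableOn_rpow_mul_exp_neg_sq_div {σ q : ℝ} (hσ : 0 < σ) (hq : -1 < q) :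
    IntegrableOn (fun t : ℝ ↦ t ^ q * exp (-t ^ 2 / (2 * σ ^ 2))) (Ioi 0) := by
  simp_rw [neg_sq_div_eq_neg_inv_mul_rpow_two, rpow_two]
  exact integrableOn_rpow_mul_exp_neg_mul_sq (by positivity) hq

lemma integral_rpow_mul_exp_neg_sq_div {σ q : ℝ} (hσ : 0 < σ) (hq : -1 < q) :
    ∫ t in Ioi 0, t ^ q * exp (-t ^ 2 / (2 * σ ^ 2)) =
      (2 * σ ^ 2) ^ ((q + 1) / 2) / 2 * Gamma ((q + 1) / 2) := by
  simp_rw [neg_sq_div_eq_neg_inv_mul_rpow_two]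
  rw [integral_rpow_mul_exp_neg_mul_rpow two_pos hq (by positivity), inv_rpow (by positivity),
    neg_div, rpow_neg (by positivity), inv_inv]
  ring

section Moments

variable {Ω : Type*} [MeasurableSpace Ω] {μ : Measure Ω} {X : Ω → ℝ} {σ : ℝ}

def HasGaussianTail (μ : Measure Ω) (X : Ω → ℝ) (σ : ℝ) : Prop :=
  ∀ t, 0 < t → μ {ω | t ≤ |X ω|} ≤ ENNReal.ofReal (2 * exp (-t ^ 2 / (2 * σ ^ 2)))

lemma hasGaussianTail_of_tails [IsFiniteMeasure μ]
    (hup : ∀ s : ℝ, 0 < s → (μ {ω | s ≤ X ω}).toReal ≤ exp (-s ^ 2 / (2 * σ ^ 2)))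
    (hdown : ∀ s : ℝ, 0 < s → (μ {ω | X ω ≤ -s}).toReal ≤ exp (-s ^ 2 / (2 * σ ^ 2))) :
    HasGaussianTail μ X σ := by
  intro t ht
  have hsub : {ω | t ≤ |X ω|} ⊆ {ω | t ≤ X ω} ∪ {ω | X ω ≤ -t} := fun ω hω ↦ by
    simpa [le_neg] using le_abs'.mp hω |>.symm
  have hofReal {s : Set Ω} (h : (μ s).toReal ≤ exp (-t ^ 2 / (2 * σ ^ 2))) :
      μ s ≤ ENNReal.ofReal (exp (-t ^ 2 / (2 * σ ^ 2))) :=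
    (ENNReal.le_ofReal_iff_toReal_le (measure_ne_top μ s) (exp_pos _).le).mpr h
  calc μ {ω | t ≤ |X ω|} ≤ μ {ω | t ≤ X ω} + μ {ω | X ω ≤ -t} :=
      (measure_mono hsub).trans (measure_union_le _ _)
    _ ≤ ENNReal.ofReal (exp (-t ^ 2 / (2 * σ ^ 2))) +
          ENNReal.ofReal (exp (-t ^ 2 / (2 * σ ^ 2))) :=
      add_le_add (hofReal (hup t ht)) (hofReal (hdown t ht))
    _ = ENNReal.ofReal (2 * exp (-t ^ 2 / (2 * σ ^ 2))) := by
      rw [← ENNReal.ofReal_add (exp_pos _).le (exp_pos _).le, ← two_mul]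

lemma HasGaussianTail.lintegral_abs_rpow_le (h : HasGaussianTail μ X σ) (hX : AEMeasurable X μ)
    (hσ : 0 < σ) {p : ℝ} (hp : 0 < p) :
    ∫⁻ ω, ENNReal.ofReal (|X ω| ^ p) ∂μ ≤
      ENNReal.ofReal (p * (2 * σ ^ 2) ^ (p / 2) * Gamma (p / 2)) := by
  have hq : -1 < p - 1 := by linarith
  have hint := integrableOn_rpow_mul_exp_neg_sq_div hσ hq
  rw [lintegral_rpow_eq_lintegral_meas_le_mul μ (ae_of_all _ fun ω ↦ abs_nonneg _) hX.abs hp]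
  calc ENNReal.ofReal p * ∫⁻ t in Ioi 0, μ {ω | t ≤ |X ω|} * ENNReal.ofReal (t ^ (p - 1))
      ≤ ENNReal.ofReal p *
          ∫⁻ t in Ioi 0, ENNReal.ofReal (2 * (t ^ (p - 1) * exp (-t ^ 2 / (2 * σ ^ 2)))) := by
        refine mul_le_mul_right (setLIntegral_mono' measurableSet_Ioi fun t ht ↦ ?_) _
        rw [mul_left_comm, ENNReal.ofReal_mul (rpow_nonneg (le_of_lt ht) _), mul_comm]
        gcongr
        exact h t ht
    _ = ENNReal.ofReal (p * (2 * σ ^ 2) ^ (p / 2) * Gamma (p / 2)) := by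
        rw [← ofReal_integral_eq_lintegral_ofReal (hint.const_mul 2), integral_const_mul,
          integral_rpow_mul_exp_neg_sq_div hσ hq,
          ← ENNReal.ofReal_mul hp.le, sub_add_cancel]
        · ring_nf
        · filter_upwards [self_mem_ae_restrict measurableSet_Ioi] with t ht
          have : (0 : ℝ) < t := ht
          positivity

lemma HasGaussianTail.lintegral_pow_two_mul_le (h : HasGaussianTail μ X σ)
    (hX : AEMeasurable X μ) (hσ : 0 < σ) {k : ℕ} (hk : k ≠ 0) :
    ∫⁻ ω, ENNReal.ofReal (X ω ^ (2 * k)) ∂μ ≤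
      ENNReal.ofReal (2 ^ (k + 1) * σ ^ (2 * k) * k !) := by
  obtain ⟨j, rfl⟩ := Nat.exists_eq_add_one_of_ne_zero hk
  have hmom := h.lintegral_abs_rpow_le hX hσ (p := (2 * (j + 1) : ℕ)) (by positivity)
  simp_rw [rpow_natCast, (even_two_mul _).pow_abs] at hmom
  convert hmom using 2
  have hhalf : ((2 * (j + 1) : ℕ) : ℝ) / 2 = (j : ℝ) + 1 := by push_cast; ring
  rw [hhalf, Gamma_nat_eq_factorial, rpow_add_one (by positivity), rpow_natCast,
    Nat.factorial_succ]
  push_cast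
  ring

lemma integrable_and_integral_le_of_lintegral_ofReal_le {f : Ω → ℝ}
    (hf : AEStronglyMeasurable f μ) (hf0 : 0 ≤ᵐ[μ] f) {C : ℝ} (hC : 0 ≤ C)
    (hle : ∫⁻ ω, ENNReal.ofReal (f ω) ∂μ ≤ ENNReal.ofReal C) :
    Integrable f μ ∧ ∫ ω, f ω ∂μ ≤ C := by
  refine ⟨⟨hf, ?_⟩, ?_⟩
  · rw [hasFiniteIntegral_iff_ofReal hf0]
    exact hle.trans_lt ENNReal.ofReal_lt_top
  · rw [integral_eq_lintegral_of_nonneg_ae hf0 hf]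
    exact ENNReal.toReal_le_of_le_ofReal hC hle

lemma HasGaussianTail.integrable_pow_two_mul_and_integral_le (h : HasGaussianTail μ X σ)
    (hX : AEMeasurable X μ) (hσ : 0 < σ) {k : ℕ} (hk : k ≠ 0) :
    Integrable (fun ω ↦ X ω ^ (2 * k)) μ ∧
      ∫ ω, X ω ^ (2 * k) ∂μ ≤ 2 ^ (k + 1) * σ ^ (2 * k) * k ! :=
  integrable_and_integral_le_of_lintegral_ofReal_le (hX.pow_const _).aestronglyMeasurable
    (ae_of_all _ fun ω ↦ (even_two_mul k).pow_nonneg _) (by positivity)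
    (h.lintegral_pow_two_mul_le hX hσ hk)

end Moments

section Exponential

variable {Ω : Type*} [MeasurableSpace Ω] {μ : Measure Ω} {X : Ω → ℝ} {σ : ℝ}

lemma lintegral_ofReal_exp_eq_tsum {f : Ω → ℝ} (hf : AEMeasurable f μ) (hf0 : ∀ ω, 0 ≤ f ω) :
    ∫⁻ ω, ENNReal.ofReal (exp (f ω)) ∂μ =
      ∑' k : ℕ, ∫⁻ ω, ENNReal.ofReal (f ω ^ k / k !) ∂μ := by
  rw [← lintegral_tsum fun k ↦ ((hf.pow_const k).div_const _).ennreal_ofReal]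
  refine lintegral_congr fun ω ↦ ?_
  rw [exp_eq_exp_ℝ, NormedSpace.exp_eq_tsum_div, ENNReal.ofReal_tsum_of_nonneg
    (fun k ↦ by have := hf0 ω; positivity) (summable_pow_div_factorial _)]

lemma HasGaussianTail.lintegral_mul_sq_pow_div_factorial_le (h : HasGaussianTail μ X σ)
    (hX : AEMeasurable X μ) (hσ : 0 < σ) {c : ℝ} (hc : 0 ≤ c) {k : ℕ} (hk : k ≠ 0) :
    ∫⁻ ω, ENNReal.ofReal ((c * X ω ^ 2) ^ k / k !) ∂μ ≤
      ENNReal.ofReal (2 * (2 * c * σ ^ 2) ^ k) :=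
  calc ∫⁻ ω, ENNReal.ofReal ((c * X ω ^ 2) ^ k / k !) ∂μ
      = ENNReal.ofReal (c ^ k / k !) * ∫⁻ ω, ENNReal.ofReal (X ω ^ (2 * k)) ∂μ := by
        rw [← lintegral_const_mul' _ _ ENNReal.ofReal_ne_top]
        refine lintegral_congr fun ω ↦ ?_
        rw [← ENNReal.ofReal_mul (by positivity), mul_pow, pow_mul]
        ring_nf
    _ ≤ ENNReal.ofReal (c ^ k / k !) * ENNReal.ofReal (2 ^ (k + 1) * σ ^ (2 * k) * k !) := by
        gcongr
        exact h.lintegral_pow_two_mul_le hX hσ hk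
    _ = ENNReal.ofReal (2 * (2 * c * σ ^ 2) ^ k) := by
        rw [← ENNReal.ofReal_mul (by positivity)]
        congr 1
        field_simp
        ring

lemma HasGaussianTail.lintegral_exp_mul_sq_le [IsProbabilityMeasure μ]
    (h : HasGaussianTail μ X σ) (hX : AEMeasurable X μ) (hσ : 0 < σ) {c : ℝ} (hc0 : 0 ≤ c)
    (hc : c ≤ 1 / (8 * σ ^ 2)) :
    ∫⁻ ω, ENNReal.ofReal (exp (c * X ω ^ 2)) ∂μ ≤
      ENNReal.ofReal (1 + c * ∫ ω, X ω ^ 2 ∂μ + 32 / 3 * c ^ 2 * σ ^ 4) := by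
  have hsq : Integrable (fun ω ↦ X ω ^ 2) μ := by
    simpa using (h.integrable_pow_two_mul_and_integral_le hX hσ one_ne_zero).1
  have hq : 2 * c * σ ^ 2 ≤ 1 / 4 := by
    rw [le_div_iff₀ (by positivity)] at hc
    linarith
  have hfirst : ∫⁻ ω, ENNReal.ofReal ((c * X ω ^ 2) ^ 1 / (1 : ℕ)!) ∂μ =
      ENNReal.ofReal (c * ∫ ω, X ω ^ 2 ∂μ) := by
    rw [← integral_const_mul, ofReal_integral_eq_lintegral_ofReal (hsq.const_mul c)
      (ae_of_all _ fun ω ↦ by positivity)]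
    simp
  have htail : ∑' k : ℕ, ∫⁻ ω, ENNReal.ofReal ((c * X ω ^ 2) ^ (k + 2) / (k + 2)!) ∂μ ≤
      ENNReal.ofReal (32 / 3 * c ^ 2 * σ ^ 4) :=
    calc ∑' k : ℕ, ∫⁻ ω, ENNReal.ofReal ((c * X ω ^ 2) ^ (k + 2) / (k + 2)!) ∂μ
        ≤ ∑' k : ℕ, ENNReal.ofReal (8 * c ^ 2 * σ ^ 4 * (1 / 4) ^ k) := by
          refine ENNReal.tsum_le_tsum fun k ↦
            (h.lintegral_mul_sq_pow_div_factorial_le hX hσ hc0 (k + 1).succ_ne_zero).trans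
              (ENNReal.ofReal_le_ofReal ?_)
          calc 2 * (2 * c * σ ^ 2) ^ (k + 2)
              = 8 * c ^ 2 * σ ^ 4 * (2 * c * σ ^ 2) ^ k := by ring
            _ ≤ 8 * c ^ 2 * σ ^ 4 * (1 / 4) ^ k := by gcongr
      _ = ENNReal.ofReal (32 / 3 * c ^ 2 * σ ^ 4) := by
          rw [← ENNReal.ofReal_tsum_of_nonneg (fun k ↦ by positivity)
            ((summable_geometric_of_lt_one (by norm_num) (by norm_num)).mul_left _),
            tsum_mul_left, tsum_geometric_of_lt_one (by norm_num) (by norm_num)]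
          norm_num
          ring_nf
  rw [lintegral_ofReal_exp_eq_tsum ((hX.pow_const 2).const_mul c)
      (fun ω ↦ by positivity), ← ENNReal.summable.sum_add_tsum_nat_add' (k := 2),
    Finset.sum_range_succ, Finset.sum_range_one, hfirst]
  rw [ENNReal.ofReal_add (by positivity) (by positivity),
    ENNReal.ofReal_add zero_le_one (by positivity)]
  gcongr
  simp

lemma HasGaussianTail.integrable_exp_mul_sq_and_integral_le [IsProbabilityMeasure μ]
    (h : HasGaussianTail μ X σ) (hX : AEMeasurable X μ) (hσ : 0 < σ) {t : ℝ}
    (ht : |t| ≤ 1 / (8 * σ ^ 2)) :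
    Integrable (fun ω ↦ exp (t * X ω ^ 2)) μ ∧
      ∫ ω, exp (t * X ω ^ 2) ∂μ ≤ 1 + t * ∫ ω, X ω ^ 2 ∂μ + 32 / 3 * t ^ 2 * σ ^ 4 := by
  have hmeas (s : ℝ) : AEMeasurable (fun ω ↦ exp (s * X ω ^ 2)) μ :=
    measurable_exp.comp_aemeasurable ((hX.pow_const 2).const_mul s)
  have hsq : Integrable (fun ω ↦ X ω ^ 2) μ := by
    simpa using (h.integrable_pow_two_mul_and_integral_le hX hσ one_ne_zero).1
  obtain ⟨habs, habs_le⟩ := integrable_and_integral_le_of_lintegral_ofReal_le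
    (hmeas |t|).aestronglyMeasurable (ae_of_all _ fun ω ↦ (exp_pos _).le)
    (add_nonneg (add_nonneg zero_le_one
      (mul_nonneg (abs_nonneg t) (integral_nonneg fun ω ↦ sq_nonneg _))) (by positivity))
    (h.lintegral_exp_mul_sq_le hX hσ (abs_nonneg t) ht)
  have hint : Integrable (fun ω ↦ exp (t * X ω ^ 2)) μ :=
    habs.mono' (hmeas t).aestronglyMeasurable <| ae_of_all _ fun ω ↦ by
      rw [norm_of_nonneg (exp_pos _).le]
      exact exp_le_exp.mpr (mul_le_mul_of_nonneg_right (le_abs_self t) (sq_nonneg _))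
  have hpt (ω : Ω) : exp (t * X ω ^ 2) ≤ exp (|t| * X ω ^ 2) + (t - |t|) * X ω ^ 2 := by
    have := exp_le_exp_abs_add_sub_abs (t * X ω ^ 2)
    rwa [abs_mul, abs_of_nonneg (sq_nonneg (X ω)), ← sub_mul] at this
  refine ⟨hint, ?_⟩
  calc ∫ ω, exp (t * X ω ^ 2) ∂μ
      ≤ ∫ ω, (exp (|t| * X ω ^ 2) + (t - |t|) * X ω ^ 2) ∂μ :=
        integral_mono hint (habs.add (hsq.const_mul _)) hpt
    _ = ∫ ω, exp (|t| * X ω ^ 2) ∂μ + (t - |t|) * ∫ ω, X ω ^ 2 ∂μ := by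
        rw [integral_add habs (hsq.const_mul _), integral_const_mul]
    _ ≤ 1 + t * ∫ ω, X ω ^ 2 ∂μ + 32 / 3 * t ^ 2 * σ ^ 4 := by
        rw [sq_abs] at habs_le
        linarith

lemma HasGaussianTail.integrable_exp_mul_sq_sub_and_integral_le [IsProbabilityMeasure μ]
    (h : HasGaussianTail μ X σ) (hX : AEMeasurable X μ) (hσ : 0 < σ) {t : ℝ}
    (ht : |t| ≤ 1 / (8 * σ ^ 2)) :
    Integrable (fun ω ↦ exp (t * (X ω ^ 2 - ∫ ω', X ω' ^ 2 ∂μ))) μ ∧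
      ∫ ω, exp (t * (X ω ^ 2 - ∫ ω', X ω' ^ 2 ∂μ)) ∂μ ≤ exp (32 / 3 * t ^ 2 * σ ^ 4) := by
  set m := ∫ ω, X ω ^ 2 ∂μ
  obtain ⟨hint, hle⟩ := h.integrable_exp_mul_sq_and_integral_le hX hσ ht
  have hfactor : (fun ω ↦ exp (t * (X ω ^ 2 - m))) =
      fun ω ↦ exp (-(t * m)) * exp (t * X ω ^ 2) := by
    ext ω
    rw [← exp_add]
    ring_nf
  rw [hfactor, integral_const_mul]
  refine ⟨hint.const_mul _, ?_⟩
  calc exp (-(t * m)) * ∫ ω, exp (t * X ω ^ 2) ∂μ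
      ≤ exp (-(t * m)) * exp (t * m + 32 / 3 * t ^ 2 * σ ^ 4) := by
        gcongr
        linarith [add_one_le_exp (t * m + 32 / 3 * t ^ 2 * σ ^ 4)]
    _ = exp (32 / 3 * t ^ 2 * σ ^ 4) := by
        rw [← exp_add]
        ring_nf

end Exponential

theorem subExponential_of_square_general {Ω : Type*} [MeasurableSpace Ω]
    (μ : Measure Ω) [IsProbabilityMeasure μ]
    (X : Ω → ℝ) (hX : Measurable X)
    (σ : ℝ) (hσ : 0 < σ)
    (hup : ∀ s : ℝ, 0 < s → (μ {ω | s ≤ X ω}).toReal ≤ Real.exp (-s ^ 2 / (2 * σ ^ 2)))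
    (hdown : ∀ s : ℝ, 0 < s → (μ {ω | X ω ≤ -s}).toReal ≤ Real.exp (-s ^ 2 / (2 * σ ^ 2))) :
    (∀ k : ℕ, 1 ≤ k →
      Integrable (fun ω => X ω ^ (2 * k)) μ ∧
        ∫ ω, X ω ^ (2 * k) ∂μ ≤ 2 ^ (k + 1) * σ ^ (2 * k) * (Nat.factorial k)) ∧
    (∀ t : ℝ, |t| ≤ 1 / (8 * σ ^ 2) →
      Integrable (fun ω => Real.exp (t * (X ω ^ 2 - ∫ ω', X ω' ^ 2 ∂μ))) μ ∧
        ∫ ω, Real.exp (t * (X ω ^ 2 - ∫ ω', X ω' ^ 2 ∂μ)) ∂μ ≤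
          Real.exp ((8 * Real.sqrt 2 * σ ^ 2) ^ 2 * t ^ 2 / 2)) := by
  have h : HasGaussianTail μ X σ := hasGaussianTail_of_tails hup hdown
  refine ⟨fun k hk ↦ h.integrable_pow_two_mul_and_integral_le hX.aemeasurable hσ (by omega),
    fun t ht ↦ ?_⟩
  obtain ⟨hint, hle⟩ := h.integrable_exp_mul_sq_sub_and_integral_le hX.aemeasurable hσ ht
  refine ⟨hint, hle.trans (exp_le_exp.mpr ?_)⟩
  rw [mul_pow, mul_pow, sq_sqrt zero_le_two]
  nlinarith [mul_nonneg (sq_nonneg t) (pow_nonneg hσ.le 4)]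

/-- For a zero-mean random variable `X` with Gaussian-type two-sided tail bounds of
parameter `σ`: all even moments satisfy `𝔼[X^{2k}] ≤ 2^{k+1} σ^{2k} k!`, and
`Z = X² − 𝔼[X²]` is sub-exponential with parameters `(8√2·σ², 8σ²)`, i.e.
`𝔼[exp(t Z)] ≤ exp((8√2 σ²)² t²/2) = exp(64 σ⁴ t²)` for all `|t| ≤ 1/(8σ²)`. -/
theorem subExponential_of_square {Ω : Type*} [MeasurableSpace Ω]
    (μ : Measure Ω) [IsProbabilityMeasure μ]
    (X : Ω → ℝ) (hX : Measurable X)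
    (hmean : ∫ ω, X ω ∂μ = 0)
    (σ : ℝ) (hσ : 0 < σ)
    (hup : ∀ s : ℝ, 0 < s → (μ {ω | s ≤ X ω}).toReal ≤ Real.exp (-s ^ 2 / (2 * σ ^ 2)))
    (hdown : ∀ s : ℝ, 0 < s → (μ {ω | X ω ≤ -s}).toReal ≤ Real.exp (-s ^ 2 / (2 * σ ^ 2))) :
    (∀ k : ℕ, 1 ≤ k →
      Integrable (fun ω => X ω ^ (2 * k)) μ ∧
        ∫ ω, X ω ^ (2 * k) ∂μ ≤ 2 ^ (k + 1) * σ ^ (2 * k) * (Nat.factorial k)) ∧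
    (∀ t : ℝ, |t| ≤ 1 / (8 * σ ^ 2) →
      Integrable (fun ω => Real.exp (t * (X ω ^ 2 - ∫ ω', X ω' ^ 2 ∂μ))) μ ∧
        ∫ ω, Real.exp (t * (X ω ^ 2 - ∫ ω', X ω' ^ 2 ∂μ)) ∂μ ≤
          Real.exp ((8 * Real.sqrt 2 * σ ^ 2) ^ 2 * t ^ 2 / 2)) :=
  subExponential_of_square_general μ X hX σ hσ hup hdown
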